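/- The system x̄' = -ȳ + x̄^2, ȳ' = x̄ - z̄, z̄' = μ̄ + a x̄ + b z̄ admits a solution that is a polynomial vector function of t if and only if μ̄ = -a(a+b)/(2b^2); in that case the solution is x̄(t) = x̄_0 + αt, ȳ(t) = (x̄_0 + αt)^2 - α, z̄(t) = (1 - 2α)(x̄_0 + αt) with α = (a+b)/(2b), for any x̄_0 ∈ R. -/

import Mathlib

/-- A function is a real polynomial function of `t`. -/
def IsPolynomialFun (f : ℝ → ℝ) : Prop := ∃ p : Polynomial ℝ, ∀ t, f t = p.eval t

/-!
For polynomial `x, y, z` the first two equations give `y = x² - x'` and `z = x - y'`, so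
`deg z ≤ deg x` forces `2 deg x - 1 ≤ deg x`, i.e. `x` is affine; and since `b ≠ 0`, the third
equation `z' - b z = μ + a x` gives exactly `deg z ≤ deg x`. For `x = α t + x₀` one gets
`z = (1 - 2α) x`, so the third equation says that the constant `(1 - 2α) α - μ` equals
`(a + b (1 - 2α)) x`; as `x` is not constant both sides vanish.
-/

open Polynomial

section DegreeBounds

variable {R : Type*} [CommRing R] [NoZeroDivisors R]

lemma natDegree_derivative_sub_C_mul {b : R} (hb : b ≠ 0) (r : R[X]) :
    (derivative r - C b * r).natDegree = r.natDegree := by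
  by_cases hr : r.natDegree = 0
  · rw [eq_C_of_natDegree_eq_zero hr]
    simp [natDegree_C_mul hb]
  · rw [natDegree_sub_eq_right_of_natDegree_lt, natDegree_C_mul hb]
    rw [natDegree_C_mul hb]
    exact natDegree_derivative_lt hr

lemma natDegree_le_of_derivative_eq {μ a b : R} (hb : b ≠ 0) {p r : R[X]}
    (h : derivative r = C μ + C a * p + C b * r) : r.natDegree ≤ p.natDegree :=
  calc r.natDegree = (derivative r - C b * r).natDegree :=
        (natDegree_derivative_sub_C_mul hb r).symm
    _ = (C μ + C a * p).natDegree := by rw [h]; ring_nf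
    _ ≤ p.natDegree := (natDegree_add_le _ _).trans (max_le (by simp) (natDegree_C_mul_le a p))

lemma natDegree_le_one_of_natDegree_derivative_le [IsAddTorsionFree R] {p : R[X]}
    (h : (derivative (p ^ 2 - derivative p)).natDegree ≤ p.natDegree) : p.natDegree ≤ 1 := by
  by_contra! hp
  have hq : (p ^ 2 - derivative p).natDegree = 2 * p.natDegree := by
    rw [natDegree_sub_eq_left_of_natDegree_lt, natDegree_pow]
    rw [natDegree_pow, natDegree_derivative]
    omega
  rw [natDegree_derivative, hq] at h
  omega

end DegreeBounds

structure IsPolySolution {R : Type*} [CommRing R] (μ a b : R) (x y z : R[X]) : Prop where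
  derivative_x : derivative x = -y + x ^ 2
  derivative_y : derivative y = x - z
  derivative_z : derivative z = C μ + C a * x + C b * z

namespace IsPolySolution

variable {K : Type*} [Field K] [CharZero K] {μ a b : K} {x y z : K[X]}

lemma natDegree_le_one (h : IsPolySolution μ a b x y z) (hb : b ≠ 0) : x.natDegree ≤ 1 := by
  have hy : y = x ^ 2 - derivative x := by linear_combination h.derivative_x
  apply natDegree_le_one_of_natDegree_derivative_le
  calc (derivative (x ^ 2 - derivative x)).natDegree = (x - z).natDegree := by
        rw [← hy, h.derivative_y]
    _ ≤ x.natDegree := (natDegree_sub_le _ _).trans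
        (max_le le_rfl (natDegree_le_of_derivative_eq hb h.derivative_z))

theorem mu_eq (h : IsPolySolution μ a b x y z) (hb : b ≠ 0) (hx : x.natDegree ≠ 0) :
    μ = -(a * (a + b)) / (2 * b ^ 2) := by
  set α := x.coeff 1
  have hx' : derivative x = C α := by
    rw [eq_X_add_C_of_natDegree_le_one (h.natDegree_le_one hb)]
    simp [α]
  have hy : y = x ^ 2 - C α := by linear_combination h.derivative_x - hx'
  have hy' : derivative y = 2 * C α * x := by
    rw [hy, derivative_sub, derivative_sq, hx', derivative_C, sub_zero, map_ofNat]
    ring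
  have hz : z = (1 - 2 * C α) * x := by linear_combination h.derivative_y - hy'
  have hz' : derivative z = (1 - 2 * C α) * C α := by rw [hz, derivative_mul]; simp [hx']
  have hrel : C ((1 - 2 * α) * α - μ) = C (a + b * (1 - 2 * α)) * x := by
    simp only [map_sub, map_mul, map_add, map_one, map_ofNat]
    linear_combination h.derivative_z - hz' + C b * hz
  have hcoeff : a + b * (1 - 2 * α) = 0 := by
    by_contra hc
    have := congrArg natDegree hrel
    rw [natDegree_C, natDegree_C_mul hc] at this
    exact hx this.symm
  have hμ : μ = (1 - 2 * α) * α := by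
    rw [hcoeff, C_0, zero_mul, C_eq_zero] at hrel
    linear_combination -hrel
  have hα : α = (a + b) / (2 * b) := by field_simp; linear_combination -hcoeff
  rw [hμ, hα]
  field_simp
  ring

end IsPolySolution

lemma Polynomial.derivative_eq_of_hasDerivAt {𝕜 : Type*} [NontriviallyNormedField 𝕜]
    {p P : 𝕜[X]} (h : ∀ t, HasDerivAt (fun t => p.eval t) (P.eval t) t) : derivative p = P :=
  Polynomial.funext fun t => (p.hasDerivAt t).unique (h t)

section ExplicitSolution

variable (x₀ α t : ℝ)

lemma hasDerivAt_const_add_mul : HasDerivAt (fun t => x₀ + α * t) α t := by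
  simpa using ((hasDerivAt_id t).const_mul α).const_add x₀

lemma hasDerivAt_solution_x :
    HasDerivAt (fun t => x₀ + α * t) (-((x₀ + α * t) ^ 2 - α) + (x₀ + α * t) ^ 2) t :=
  (hasDerivAt_const_add_mul x₀ α t).congr_deriv (by ring)

lemma hasDerivAt_solution_y :
    HasDerivAt (fun t => (x₀ + α * t) ^ 2 - α)
      ((x₀ + α * t) - (1 - 2 * α) * (x₀ + α * t)) t :=
  (((hasDerivAt_const_add_mul x₀ α t).pow 2).sub_const α).congr_deriv (by ring)

lemma hasDerivAt_solution_z {μ a b : ℝ} (hb : b ≠ 0) (hμ : μ = -(a * (a + b)) / (2 * b ^ 2))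
    (hα : α = (a + b) / (2 * b)) :
    HasDerivAt (fun t => (1 - 2 * α) * (x₀ + α * t))
      (μ + a * (x₀ + α * t) + b * ((1 - 2 * α) * (x₀ + α * t))) t := by
  refine ((hasDerivAt_const_add_mul x₀ α t).const_mul (1 - 2 * α)).congr_deriv ?_
  rw [hμ, hα]
  field_simp
  ring

end ExplicitSolution

/-- The system x' = -y + x², y' = x - z, z' = μ + ax + bz admits a (nonconstant)
polynomial vector solution iff μ = -a(a+b)/(2b²); in that case, for any x₀,
x(t) = x₀ + αt, y(t) = (x₀+αt)² - α, z(t) = (1-2α)(x₀+αt) with α = (a+b)/(2b)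
is a solution. -/
theorem polynomial_solution_iff (a b μ : ℝ) (hb : b ≠ 0) (hab : a + b ≠ 0) :
    ((∃ x y z : ℝ → ℝ,
        IsPolynomialFun x ∧ IsPolynomialFun y ∧ IsPolynomialFun z ∧
        (∀ t, HasDerivAt x (-(y t) + (x t) ^ 2) t) ∧
        (∀ t, HasDerivAt y (x t - z t) t) ∧
        (∀ t, HasDerivAt z (μ + a * x t + b * z t) t) ∧
        (∃ t₀, x t₀ ≠ x 0)) ↔ μ = -(a * (a + b)) / (2 * b ^ 2)) ∧
    (μ = -(a * (a + b)) / (2 * b ^ 2) → ∀ x₀ : ℝ,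
      (∀ t, HasDerivAt (fun t => x₀ + ((a + b) / (2 * b)) * t)
          (-((x₀ + ((a + b) / (2 * b)) * t) ^ 2 - (a + b) / (2 * b)) +
            (x₀ + ((a + b) / (2 * b)) * t) ^ 2) t) ∧
      (∀ t, HasDerivAt (fun t => (x₀ + ((a + b) / (2 * b)) * t) ^ 2 - (a + b) / (2 * b))
          ((x₀ + ((a + b) / (2 * b)) * t) -
            (1 - 2 * ((a + b) / (2 * b))) * (x₀ + ((a + b) / (2 * b)) * t)) t) ∧
      (∀ t, HasDerivAt (fun t => (1 - 2 * ((a + b) / (2 * b))) * (x₀ + ((a + b) / (2 * b)) * t))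
          (μ + a * (x₀ + ((a + b) / (2 * b)) * t) +
            b * ((1 - 2 * ((a + b) / (2 * b))) * (x₀ + ((a + b) / (2 * b)) * t))) t)) := by
  set α := (a + b) / (2 * b) with hα
  have explicit : μ = -(a * (a + b)) / (2 * b ^ 2) → ∀ x₀ : ℝ, _ ∧ _ ∧ _ := fun hμ x₀ =>
    ⟨hasDerivAt_solution_x x₀ α, hasDerivAt_solution_y x₀ α,
      (hasDerivAt_solution_z x₀ α · hb hμ hα)⟩
  refine ⟨⟨?_, fun hμ => ?_⟩, explicit⟩
  · rintro ⟨x, y, z, ⟨p, hp⟩, ⟨q, hq⟩, ⟨r, hr⟩, hx, hy, hz, t₀, ht₀⟩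
    obtain rfl : x = fun t => p.eval t := funext hp
    obtain rfl : y = fun t => q.eval t := funext hq
    obtain rfl : z = fun t => r.eval t := funext hr
    have hsol : IsPolySolution μ a b p q r :=
      ⟨derivative_eq_of_hasDerivAt (by simpa using hx),
        derivative_eq_of_hasDerivAt (by simpa using hy),
        derivative_eq_of_hasDerivAt (by simpa using hz)⟩
    refine hsol.mu_eq hb fun hp0 => ht₀ ?_
    rw [eq_C_of_natDegree_eq_zero hp0]
    simp
  · obtain ⟨hx, hy, hz⟩ := explicit hμ 0
    refine ⟨_, _, _, ⟨C α * X, by simp⟩, ⟨(C α * X) ^ 2 - C α, by simp⟩,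
      ⟨C (1 - 2 * α) * (C α * X), by simp⟩, hx, hy, hz, 1, ?_⟩
    simpa [hα] using ⟨hab, hb⟩
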